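/- arXiv:1303.0002 — 5 statements merged into one kernel-verified Lean document; each statement's English description precedes it below -/
import Mathlib

section
/- Let C = (C_1, ..., C_m) be an equitable partition of the n-cube with quotient matrix S, fix a vertex v and index j, and let W_{v,j}^{r_1,r_2,r_3} = (W_{v,j1}^{r_1,r_2,r_3}, ..., W_{v,jm}^{r_1,r_2,r_3}) where W_{v,jk}^{r_1,r_2,r_3} counts pairs (x,y) with x ∈ C_j, y ∈ C_k, d(v,y) = r_1+r_3, d(x,y) = r_2+r_3, d(v,x) = r_1+r_2. Then W_{v,j}^{r_1,r_2,r_3} · S = (r_1+1) W_{v,j}^{r_1+1,r_2-1,r_3} + (r_2+1) W_{v,j}^{r_1-1,r_2+1,r_3} + (r_3+1) W_{v,j}^{r_1,r_2,r_3+1} + (n - r_1 - r_2 - r_3 + 1) W_{v,j}^{r_1,r_2,r_3-1}, where terms with a negative index are zero vectors. -/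
/-!
For vertices `v, x, z` of the cube, each coordinate is of one of four kinds: `v`, `x` or `z` is
the odd one out, or all three agree. If `a, b, c` count the first three kinds, then
`d(v,x) = a + b`, `d(v,z) = a + c` and `d(x,z) = b + c`, so `HasDistPattern v x z r1 r2 r3` says
exactly that `(a, b, c) = (r1, r2, r3)`. Flipping one coordinate of `z` moves it from the kind of
`v` to that of `x`, from `x` to `v`, from `z` to "all agree", or from "all agree" to `z`; hence
the neighbours `y` of `z` with pattern `(r1, r2, r3)` number
`(r1 + 1) [z has pattern (r1 + 1, r2 - 1, r3)] + ⋯ + (n - r1 - r2 - r3 + 1) [(r1, r2, r3 - 1)]`.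
Summing this over `x ∈ C j`, `z ∈ C k`, and counting the neighbours of each `y` in `C k` through
the quotient matrix, gives the recursion.
-/

/-- `W_{v,jk}^{r_1,r_2,r_3}`: the number of pairs `(x,y)` with `x ∈ C j`, `y ∈ C k`,
`d(v,y) = r_1+r_3`, `d(x,y) = r_2+r_3`, `d(v,x) = r_1+r_2` (indices in `ℤ`; for a
negative index the count is automatically zero). -/
def Wdist {n m : ℕ} (C : Fin m → Finset (Fin n → Bool)) (v : Fin n → Bool)
    (j : Fin m) (r1 r2 r3 : ℤ) (k : Fin m) : ℤ :=
  ((Finset.univ ×ˢ Finset.univ).filter fun p : (Fin n → Bool) × (Fin n → Bool) =>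
    p.1 ∈ C j ∧ p.2 ∈ C k ∧ (hammingDist v p.2 : ℤ) = r1 + r3 ∧
      (hammingDist p.1 p.2 : ℤ) = r2 + r3 ∧
      (hammingDist v p.1 : ℤ) = r1 + r2).card

open Finset Function

theorem sum_boole_eq_mul_boole {α : Type*} {s : Finset α} {Q : α → Prop} [DecidablePred Q]
    {P : Prop} [Decidable P] {c : ℤ} (hQ : ∀ a ∈ s, Q a ↔ P) (hc : P → #s = c) :
    ∑ a ∈ s, (if Q a then 1 else 0 : ℤ) = c * if P then 1 else 0 := by
  rw [sum_congr rfl fun a ha => if_congr (hQ a ha) rfl rfl, sum_const, nsmul_eq_mul, mul_boole,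
    mul_boole]
  exact ite_congr rfl (fun hP => by rw [hc hP]) fun _ => rfl

theorem sum_card_mul_card_eq_sum_sum_card {α β γ : Type*} [Fintype β] (s : Finset α)
    (t : Finset γ) (R : α → β → Prop) (T : β → γ → Prop) [∀ x, DecidablePred (R x)]
    [∀ y, DecidablePred (T y)] :
    ∑ y, #{x ∈ s | R x y} * #{z ∈ t | T y z} = ∑ z ∈ t, ∑ x ∈ s, #{y | R x y ∧ T y z} := by
  simp only [card_filter, sum_mul_sum, ite_zero_mul_ite_zero, mul_one]
  rw [Finset.sum_comm, Finset.sum_comm (s := t)]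
  exact sum_congr rfl fun x _ => Finset.sum_comm

section EquitablePartition

variable {V ι : Type*} [Fintype ι] [DecidableEq V] (C : ι → Finset V) (S : Matrix ι ι ℤ)
  (adj : V → V → Prop) [DecidableRel adj]

theorem sum_sum_mem_mul_eq_sum_mul_card_adj [Fintype V] (hpart : ∀ v, ∃! i, v ∈ C i)
    (hequit : ∀ i, ∀ v ∈ C i, ∀ j, (#{u ∈ C j | adj v u} : ℤ) = S i j) (w : V → ℤ) (k : ι) :
    ∑ t, (∑ y ∈ C t, w y) * S t k = ∑ y, w y * #{z ∈ C k | adj y z} := by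
  have hrow (y : V) : ∑ t with y ∈ C t, S t k = #{z ∈ C k | adj y z} := by
    obtain ⟨t₀, ht₀, huniq⟩ := hpart y
    rw [show ({t | y ∈ C t} : Finset ι) = {t₀} from
      eq_singleton_iff_unique_mem.2 ⟨by simpa using ht₀, fun t ht => huniq t (by simpa using ht)⟩,
      sum_singleton, hequit t₀ y ht₀ k]
  simp only [sum_mul]
  rw [sum_comm' (t' := univ) (s' := fun y => {t | y ∈ C t}) (by simp)]
  simp only [← mul_sum, hrow]

end EquitablePartition

section Hypercube

variable {ι : Type*}

theorem update_not_injective [DecidableEq ι] (z : ι → Bool) :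
    Injective fun i => update z i (!z i) := by
  intro i i' h
  by_contra hne
  have := congrFun h i
  simp [update_of_ne hne] at this

variable [Fintype ι]

def HasDistPattern (v x y : ι → Bool) (r1 r2 r3 : ℤ) : Prop :=
  (hammingDist v y : ℤ) = r1 + r3 ∧ (hammingDist x y : ℤ) = r2 + r3 ∧
    (hammingDist v x : ℤ) = r1 + r2

instance (v x y : ι → Bool) (r1 r2 r3 : ℤ) : Decidable (HasDistPattern v x y r1 r2 r3) :=
  inferInstanceAs (Decidable (_ ∧ _ ∧ _))

theorem card_oddOneOut_of_hasDistPattern {v x z : ι → Bool} {p1 p2 p3 : ℤ}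
    (h : HasDistPattern v x z p1 p2 p3) :
    (#{i | v i ≠ z i ∧ x i = z i} : ℤ) = p1 ∧ (#{i | v i = z i ∧ x i ≠ z i} : ℤ) = p2 ∧
      (#{i | v i ≠ z i ∧ x i ≠ z i} : ℤ) = p3 ∧
      (#{i | v i = z i ∧ x i = z i} : ℤ) = Fintype.card ι - p1 - p2 - p3 := by
  have hcoord (i : ι) :
      (if v i ≠ z i then 1 else 0 : ℤ) =
          (if v i ≠ z i ∧ x i = z i then 1 else 0) + (if v i ≠ z i ∧ x i ≠ z i then 1 else 0) ∧
        (if x i ≠ z i then 1 else 0 : ℤ) =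
          (if v i = z i ∧ x i ≠ z i then 1 else 0) + (if v i ≠ z i ∧ x i ≠ z i then 1 else 0) ∧
        (if v i ≠ x i then 1 else 0 : ℤ) =
          (if v i ≠ z i ∧ x i = z i then 1 else 0) + (if v i = z i ∧ x i ≠ z i then 1 else 0) ∧
        (1 : ℤ) = (if v i ≠ z i ∧ x i = z i then 1 else 0) +
          (if v i = z i ∧ x i ≠ z i then 1 else 0) + (if v i ≠ z i ∧ x i ≠ z i then 1 else 0) +
          (if v i = z i ∧ x i = z i then 1 else 0) := by
    cases v i <;> cases x i <;> cases z i <;> decide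
  have hvz := sum_congr rfl fun i (_ : i ∈ univ) => (hcoord i).1
  have hxz := sum_congr rfl fun i (_ : i ∈ univ) => (hcoord i).2.1
  have hvx := sum_congr rfl fun i (_ : i ∈ univ) => (hcoord i).2.2.1
  have hcard := sum_congr rfl fun i (_ : i ∈ univ) => (hcoord i).2.2.2
  simp only [sum_add_distrib, sum_const, card_univ, nsmul_one] at hvz hxz hvx hcard
  simp only [HasDistPattern, hammingDist, natCast_card_filter] at h ⊢
  omega

theorem sum_split_oddOneOut {M : Type*} [AddCommMonoid M] (v x z : ι → Bool) (f : ι → M) :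
    ∑ i, f i = ∑ i with v i ≠ z i ∧ x i = z i, f i + ∑ i with v i = z i ∧ x i ≠ z i, f i
      + ∑ i with v i ≠ z i ∧ x i ≠ z i, f i + ∑ i with v i = z i ∧ x i = z i, f i := by
  rw [← sum_filter_add_sum_filter_not univ (fun i => v i = z i),
    ← sum_filter_add_sum_filter_not (filter _ univ) (fun i => x i = z i),
    ← sum_filter_add_sum_filter_not (filter _ univ) (fun i => x i = z i)]
  simp only [filter_filter]
  abel

variable [DecidableEq ι]

theorem natCast_hammingDist_update_not (a z : ι → Bool) (i : ι) :
    (hammingDist a (update z i (!z i)) : ℤ) = hammingDist a z + if a i = z i then 1 else -1 := by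
  have hsplit (w : ι → Bool) : (hammingDist a w : ℤ)
      = (if a i ≠ w i then 1 else 0) + ∑ j ∈ {i}ᶜ, if a j ≠ w j then 1 else 0 := by
    rw [hammingDist, natCast_card_filter, Fintype.sum_eq_add_sum_compl i]
  have hrest : ∑ j ∈ {i}ᶜ, (if a j ≠ update z i (!z i) j then 1 else 0 : ℤ)
      = ∑ j ∈ {i}ᶜ, if a j ≠ z j then 1 else 0 :=
    sum_congr rfl fun j hj => by rw [update_of_ne (by simpa using hj)]
  rw [hsplit, hsplit z, hrest, update_self]
  cases a i <;> cases z i <;> simp <;> ring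

theorem hammingDist_eq_one_iff_exists_update_not {y z : ι → Bool} :
    hammingDist y z = 1 ↔ ∃ i, y = update z i (!z i) := by
  simp only [hammingDist, card_eq_one, Finset.ext_iff, mem_filter, mem_univ, true_and,
    mem_singleton, funext_iff]
  refine exists_congr fun i => forall_congr' fun j => ?_
  rcases eq_or_ne j i with rfl | hj
  · cases y j <;> cases z j <;> simp
  · simp [hj]

theorem card_filter_and_hammingDist_eq_one (P : (ι → Bool) → Prop) [DecidablePred P]
    (z : ι → Bool) :
    #{y | P y ∧ hammingDist y z = 1} = #{i | P (update z i (!z i))} := by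
  symm
  refine card_bij (fun i _ => update z i (!z i)) (fun i hi => ?_)
    (fun i _ i' _ h => update_not_injective z h) (fun y hy => ?_)
  · simp only [mem_filter, mem_univ, true_and] at hi ⊢
    exact ⟨hi, hammingDist_eq_one_iff_exists_update_not.2 ⟨i, rfl⟩⟩
  · simp only [mem_filter, mem_univ, true_and] at hy
    obtain ⟨i, rfl⟩ := hammingDist_eq_one_iff_exists_update_not.1 hy.2
    exact ⟨i, by simpa using hy.1, rfl⟩

theorem card_neighbor_hasDistPattern (v x z : ι → Bool) (r1 r2 r3 : ℤ) :
    (#{y | HasDistPattern v x y r1 r2 r3 ∧ hammingDist y z = 1} : ℤ) =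
      (r1 + 1) * (if HasDistPattern v x z (r1 + 1) (r2 - 1) r3 then 1 else 0)
      + (r2 + 1) * (if HasDistPattern v x z (r1 - 1) (r2 + 1) r3 then 1 else 0)
      + (r3 + 1) * (if HasDistPattern v x z r1 r2 (r3 + 1) then 1 else 0)
      + (Fintype.card ι - r1 - r2 - r3 + 1) *
          (if HasDistPattern v x z r1 r2 (r3 - 1) then 1 else 0) := by
  rw [card_filter_and_hammingDist_eq_one, natCast_card_filter, sum_split_oddOneOut v x z]
  have hflip (i : ι) : HasDistPattern v x (update z i (!z i)) r1 r2 r3 ↔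
      (hammingDist v z : ℤ) + (if v i = z i then 1 else -1) = r1 + r3 ∧
        (hammingDist x z : ℤ) + (if x i = z i then 1 else -1) = r2 + r3 ∧
        (hammingDist v x : ℤ) = r1 + r2 := by
    rw [HasDistPattern, natCast_hammingDist_update_not, natCast_hammingDist_update_not]
  congr 1; congr 1; congr 1
  · refine sum_boole_eq_mul_boole (fun i hi => ?_) fun h =>
      (card_oddOneOut_of_hasDistPattern h).1
    obtain ⟨hv, hx⟩ := (mem_filter.1 hi).2
    rw [hflip, if_neg hv, if_pos hx, HasDistPattern]; omega
  · refine sum_boole_eq_mul_boole (fun i hi => ?_) fun h =>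
      (card_oddOneOut_of_hasDistPattern h).2.1.trans (by ring)
    obtain ⟨hv, hx⟩ := (mem_filter.1 hi).2
    rw [hflip, if_pos hv, if_neg hx, HasDistPattern]; omega
  · refine sum_boole_eq_mul_boole (fun i hi => ?_) fun h =>
      (card_oddOneOut_of_hasDistPattern h).2.2.1
    obtain ⟨hv, hx⟩ := (mem_filter.1 hi).2
    rw [hflip, if_neg hv, if_neg hx, HasDistPattern]; omega
  · refine sum_boole_eq_mul_boole (fun i hi => ?_) fun h =>
      (card_oddOneOut_of_hasDistPattern h).2.2.2.trans (by ring)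
    obtain ⟨hv, hx⟩ := (mem_filter.1 hi).2
    rw [hflip, if_pos hv, if_pos hx, HasDistPattern]; omega

end Hypercube

theorem Wdist_eq_sum {n m : ℕ} (C : Fin m → Finset (Fin n → Bool)) (v : Fin n → Bool)
    (j : Fin m) (r1 r2 r3 : ℤ) (k : Fin m) :
    Wdist C v j r1 r2 r3 k = ∑ y ∈ C k, (#{x ∈ C j | HasDistPattern v x y r1 r2 r3} : ℤ) := by
  have hpairs : ((univ ×ˢ univ).filter fun p : (Fin n → Bool) × (Fin n → Bool) =>
      p.1 ∈ C j ∧ p.2 ∈ C k ∧ HasDistPattern v p.1 p.2 r1 r2 r3)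
      = (C j ×ˢ C k).filter fun p => HasDistPattern v p.1 p.2 r1 r2 r3 := by
    ext; simp [and_assoc]
  calc Wdist C v j r1 r2 r3 k = #{p ∈ C j ×ˢ C k | HasDistPattern v p.1 p.2 r1 r2 r3} :=
        congrArg (fun s => (#s : ℤ)) hpairs
    _ = _ := by simp only [natCast_card_filter, sum_product_right]

/-- the recursion `W_{v,j}^{r_1,r_2,r_3} · S
= (r_1+1) W^{r_1+1,r_2-1,r_3} + (r_2+1) W^{r_1-1,r_2+1,r_3}
+ (r_3+1) W^{r_1,r_2,r_3+1} + (n-r_1-r_2-r_3+1) W^{r_1,r_2,r_3-1}`,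
for an equitable partition `C` of the `n`-cube with quotient matrix `S`. -/
theorem Wdist_recursion {n m : ℕ} (C : Fin m → Finset (Fin n → Bool))
    (S : Matrix (Fin m) (Fin m) ℤ)
    (hpart : ∀ v : Fin n → Bool, ∃! i : Fin m, v ∈ C i)
    (hequit : ∀ i : Fin m, ∀ v ∈ C i, ∀ j : Fin m,
      (((C j).filter fun u => hammingDist v u = 1).card : ℤ) = S i j)
    (v : Fin n → Bool) (j : Fin m) (r1 r2 r3 : ℤ) :
    ∀ k : Fin m,
      (∑ t : Fin m, Wdist C v j r1 r2 r3 t * S t k) =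
        (r1 + 1) * Wdist C v j (r1 + 1) (r2 - 1) r3 k
        + (r2 + 1) * Wdist C v j (r1 - 1) (r2 + 1) r3 k
        + (r3 + 1) * Wdist C v j r1 r2 (r3 + 1) k
        + (n - r1 - r2 - r3 + 1) * Wdist C v j r1 r2 (r3 - 1) k := by
  intro k
  calc ∑ t, Wdist C v j r1 r2 r3 t * S t k
      = ∑ y, (#{x ∈ C j | HasDistPattern v x y r1 r2 r3} : ℤ) *
          #{z ∈ C k | hammingDist y z = 1} := by
        simp only [Wdist_eq_sum]
        exact sum_sum_mem_mul_eq_sum_mul_card_adj C S _ hpart hequit _ k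
    _ = ∑ z ∈ C k, ∑ x ∈ C j,
          (#{y | HasDistPattern v x y r1 r2 r3 ∧ hammingDist y z = 1} : ℤ) := by
        exact_mod_cast sum_card_mul_card_eq_sum_sum_card (C j) (C k) _ _
    _ = _ := by
        simp only [card_neighbor_hasDistPattern, Fintype.card_fin]
        simp only [Wdist_eq_sum, natCast_card_filter, mul_sum, ← sum_add_distrib]
end

section
/- Let C be an equitable partition of the n-cube with quotient matrix S, and define the triangle distribution T^{r_1,r_2,r_3} as the vector of length m³ whose (i,j,k)-entry counts triples (v,x,y) with v ∈ C_i, x ∈ C_j, y ∈ C_k, d(x,y) = r_2+r_3, d(v,y) = r_1+r_3, d(v,x) = r_1+r_2. Then T^{r_1,r_2,r_3} S''' = (r_1+1) T^{r_1+1,r_2-1,r_3} + (r_2+1) T^{r_1-1,r_2+1,r_3} + (n - r_1 - r_2 - r_3 + 1) T^{r_1,r_2,r_3-1} + (r_3+1) T^{r_1,r_2,r_3+1}, where S''' = I⊗I⊗S acts on the third index and terms with negative indices vanish. -/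
/-- `T^{r_1,r_2,r_3}_{ijk}`: the number of triples `(v,x,y)` with `v ∈ C i`,
`x ∈ C j`, `y ∈ C k`, `d(x,y) = r_2+r_3`, `d(v,y) = r_1+r_3`, `d(v,x) = r_1+r_2`
(indices in `ℤ`; for a negative index the count is automatically zero). -/
def Tdist {n m : ℕ} (C : Fin m → Finset (Fin n → Bool)) (r1 r2 r3 : ℤ)
    (i j k : Fin m) : ℤ :=
  ((Finset.univ ×ˢ Finset.univ ×ˢ Finset.univ).filter
    fun t : (Fin n → Bool) × (Fin n → Bool) × (Fin n → Bool) =>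
      t.1 ∈ C i ∧ t.2.1 ∈ C j ∧ t.2.2 ∈ C k ∧
        (hammingDist t.2.1 t.2.2 : ℤ) = r2 + r3 ∧
        (hammingDist t.1 t.2.2 : ℤ) = r1 + r3 ∧
        (hammingDist t.1 t.2.1 : ℤ) = r1 + r2).card

/-! For words `v, x, y` of the cube, the side lengths `d(x,y) = r₂+r₃`, `d(v,y) = r₁+r₃`,
`d(v,x) = r₁+r₂` say exactly that `v`, `x`, `y` is the odd one out in `r₁`, `r₂`, `r₃`
coordinates respectively. By equitability, `(T S''')_{ijk}` counts pairs `(y, z)` of adjacent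
words with `z ∈ C k` and `(v, x, y)` of type `(r₁, r₂, r₃)`. Count from `z` instead: the
neighbours of `z` are its one-coordinate flips, and flipping `z` at `p` shifts the type of
`(v, x, z)` by an amount that only depends on whether `v p` and `x p` agree with `z p`.
So `(v, x, z)` must have one of four shifted types, and the number of good coordinates `p` is
the size of the corresponding class: `r₁+1`, `r₂+1`, `r₃+1`, or `n-r₁-r₂-r₃+1` for the
coordinates where all three words agree. -/

open Finset

lemma sum_boole_of_iff {ι : Type*} {s : Finset ι} {Q : ι → Prop} [DecidablePred Q] {P : Prop}
    [Decidable P] {c : ℤ} (hQ : ∀ i ∈ s, Q i ↔ P) (hc : P → (#s : ℤ) = c) :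
    ∑ i ∈ s, (if Q i then (1 : ℤ) else 0) = c * if P then 1 else 0 := by
  by_cases hP : P
  · rw [sum_congr rfl fun i hi => if_pos ((hQ i hi).mpr hP), if_pos hP, ← hc hP]
    simp
  · rw [sum_congr rfl fun i hi => if_neg ((hQ i hi).not.mpr hP), if_neg hP]
    simp

section EquitablePartition

variable {V ι : Type*} [Fintype V] [Fintype ι]

lemma sum_sum_of_existsUnique_mem {M : Type*} [AddCommMonoid M] {C : ι → Finset V}
    (hpart : ∀ v, ∃! i, v ∈ C i) (g : V → M) :
    ∑ i, ∑ v ∈ C i, g v = ∑ v, g v := by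
  classical
  rw [sum_comm' (t' := univ) (s' := fun v => {i | v ∈ C i}) (h := by simp)]
  refine sum_congr rfl fun v _ => ?_
  obtain ⟨i, hi, huniq⟩ := hpart v
  rw [show ({i | v ∈ C i} : Finset ι) = {i} by ext; simpa using ⟨huniq _, fun h => h ▸ hi⟩,
    sum_singleton]

lemma sum_card_filter_mul_quotient (G : SimpleGraph V) [DecidableRel G.Adj] {C : ι → Finset V}
    {S : Matrix ι ι ℤ} (hpart : ∀ v, ∃! i, v ∈ C i)
    (hequit : ∀ i, ∀ v ∈ C i, ∀ j, (#{u ∈ C j | G.Adj v u} : ℤ) = S i j)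
    (Q : V → Prop) [DecidablePred Q] (k : ι) :
    ∑ t, (#{y ∈ C t | Q y} : ℤ) * S t k =
      ∑ z ∈ C k, (#{y | G.Adj z y ∧ Q y} : ℤ) := by
  calc ∑ t, (#{y ∈ C t | Q y} : ℤ) * S t k
      = ∑ t, ∑ y ∈ C t, (if Q y then (1 : ℤ) else 0) * #{z ∈ C k | G.Adj y z} := by
        simp_rw [natCast_card_filter, sum_mul]
        exact sum_congr rfl fun t _ => sum_congr rfl fun y hy => by
          rw [← hequit t y hy k, natCast_card_filter]
    _ = ∑ y, (if Q y then (1 : ℤ) else 0) * #{z ∈ C k | G.Adj y z} :=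
        sum_sum_of_existsUnique_mem hpart _
    _ = ∑ z ∈ C k, (#{y | G.Adj z y ∧ Q y} : ℤ) := by
        simp_rw [natCast_card_filter, mul_sum]
        rw [sum_comm]
        refine sum_congr rfl fun z _ => sum_congr rfl fun y _ => ?_
        simp only [G.adj_comm y z, ite_and, mul_ite, mul_one, mul_zero]

end EquitablePartition

namespace Hypercube

variable {n : ℕ}

def flipAt (z : Fin n → Bool) (p : Fin n) : Fin n → Bool :=
  Function.update z p (!z p)

def graph (n : ℕ) : SimpleGraph (Fin n → Bool) where
  Adj v u := hammingDist v u = 1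
  symm := ⟨fun v u (h : hammingDist v u = 1) => (hammingDist_comm u v).trans h⟩
  loopless := ⟨fun v (h : hammingDist v v = 1) => by simp at h⟩

instance : DecidableRel (graph n).Adj :=
  fun v u => inferInstanceAs (Decidable (hammingDist v u = 1))

lemma hammingDist_flipAt (v z : Fin n → Bool) (p : Fin n) :
    (hammingDist v (flipAt z p) : ℤ) = hammingDist v z + if v p = z p then 1 else -1 := by
  simp only [hammingDist, natCast_card_filter]
  rw [← add_sum_erase _ _ (mem_univ p), ← add_sum_erase _ _ (mem_univ p)]
  have hoff : ∑ q ∈ univ.erase p, (if v q ≠ flipAt z p q then (1 : ℤ) else 0) =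
      ∑ q ∈ univ.erase p, if v q ≠ z q then 1 else 0 :=
    sum_congr rfl fun q hq => by rw [flipAt, Function.update_of_ne (ne_of_mem_erase hq)]
  rw [hoff, flipAt, Function.update_self]
  cases v p <;> cases z p <;> simp <;> ring

lemma flipAt_injective (z : Fin n → Bool) : Function.Injective (flipAt z) := by
  intro p q h
  by_contra hpq
  have := congrFun h p
  rw [flipAt, flipAt, Function.update_self, Function.update_of_ne hpq] at this
  cases z p <;> simp at this

lemma graph_adj_iff_exists_flipAt {z y : Fin n → Bool} :
    (graph n).Adj z y ↔ ∃ p, flipAt z p = y := by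
  change hammingDist z y = 1 ↔ _
  constructor
  · intro h
    obtain ⟨p, hp⟩ := card_eq_one.mp h
    have hdiff : ∀ q, z q ≠ y q ↔ q = p := fun q => by
      simpa using congrArg (q ∈ ·) hp
    refine ⟨p, funext fun q => ?_⟩
    by_cases hq : q = p
    · subst hq
      rw [flipAt, Function.update_self]
      have := (hdiff q).mpr rfl
      cases hz : z q <;> cases hy : y q <;> simp_all
    · rw [flipAt, Function.update_of_ne hq]
      exact not_not.mp fun h => hq ((hdiff q).mp h)
  · rintro ⟨p, rfl⟩
    have := hammingDist_flipAt z z p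
    simp only [hammingDist_self, if_true] at this
    omega

lemma card_filter_adj_eq_card_filter_flipAt (z : Fin n → Bool) (P : (Fin n → Bool) → Prop)
    [DecidablePred P] :
    #{y | (graph n).Adj z y ∧ P y} = #{p | P (flipAt z p)} := by
  have hsphere : ({y | (graph n).Adj z y} : Finset _) = univ.image (flipAt z) := by
    ext y; simp [graph_adj_iff_exists_flipAt]
  rw [← filter_filter, hsphere, filter_image, card_image_of_injective _ (flipAt_injective z)]

def HasTriangleType (r1 r2 r3 : ℤ) (v x y : Fin n → Bool) : Prop :=
  (hammingDist x y : ℤ) = r2 + r3 ∧ (hammingDist v y : ℤ) = r1 + r3 ∧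
    (hammingDist v x : ℤ) = r1 + r2

instance (r1 r2 r3 : ℤ) (v x y : Fin n → Bool) :
    Decidable (HasTriangleType r1 r2 r3 v x y) := by
  unfold HasTriangleType; infer_instance

def agreement (v x z : Fin n → Bool) (p : Fin n) : Bool × Bool :=
  (v p == z p, x p == z p)

lemma card_agreement_of_hasTriangleType {v x z : Fin n → Bool} {a1 a2 a3 : ℤ}
    (h : HasTriangleType a1 a2 a3 v x z) :
    (#{p | agreement v x z p = (false, true)} : ℤ) = a1 ∧
    (#{p | agreement v x z p = (true, false)} : ℤ) = a2 ∧
    (#{p | agreement v x z p = (false, false)} : ℤ) = a3 ∧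
    (#{p | agreement v x z p = (true, true)} : ℤ) = n - a1 - a2 - a3 := by
  have htotal := card_eq_sum_card_fiberwise (f := agreement v x z) (s := univ) (t := univ)
    fun _ _ => mem_univ _
  simp only [Fintype.sum_prod_type, Fintype.sum_bool, card_univ, Fintype.card_fin] at htotal
  obtain ⟨hxz, hvz, hvx⟩ := h
  have hdist :
      hammingDist x z = #{p | agreement v x z p = (true, false)} +
        #{p | agreement v x z p = (false, false)} ∧
      hammingDist v z = #{p | agreement v x z p = (false, true)} +
        #{p | agreement v x z p = (false, false)} ∧
      hammingDist v x = #{p | agreement v x z p = (false, true)} +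
        #{p | agreement v x z p = (true, false)} := by
    refine ⟨?_, ?_, ?_⟩ <;>
    · simp only [hammingDist, card_filter, ← sum_add_distrib]
      refine sum_congr rfl fun p _ => ?_
      rcases Bool.eq_false_or_eq_true (v p) with hv | hv <;>
      rcases Bool.eq_false_or_eq_true (x p) with hx | hx <;>
      rcases Bool.eq_false_or_eq_true (z p) with hz | hz <;>
      simp [agreement, hv, hx, hz]
  omega

lemma card_hasTriangleType_flipAt (v x z : Fin n → Bool) (r1 r2 r3 : ℤ) :
    (#{p | HasTriangleType r1 r2 r3 v x (flipAt z p)} : ℤ) =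
      (r1 + 1) * (if HasTriangleType (r1 + 1) (r2 - 1) r3 v x z then 1 else 0)
      + (r2 + 1) * (if HasTriangleType (r1 - 1) (r2 + 1) r3 v x z then 1 else 0)
      + (n - r1 - r2 - r3 + 1) * (if HasTriangleType r1 r2 (r3 - 1) v x z then 1 else 0)
      + (r3 + 1) * (if HasTriangleType r1 r2 (r3 + 1) v x z then 1 else 0) := by
  rw [natCast_card_filter, ← sum_fiberwise univ (agreement v x z)]
  simp only [Fintype.sum_prod_type, Fintype.sum_bool]
  rw [sum_boole_of_iff (P := HasTriangleType r1 r2 (r3 - 1) v x z) (c := n - r1 - r2 - r3 + 1),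
    sum_boole_of_iff (P := HasTriangleType (r1 - 1) (r2 + 1) r3 v x z) (c := r2 + 1),
    sum_boole_of_iff (P := HasTriangleType (r1 + 1) (r2 - 1) r3 v x z) (c := r1 + 1),
    sum_boole_of_iff (P := HasTriangleType r1 r2 (r3 + 1) v x z) (c := r3 + 1)]
  · ring
  -- On each agreement class, flipping `z` shifts the type of `(v, x, z)` by a fixed amount,
  -- and given the shifted type the size of the class is the coefficient.
  all_goals first
    | intro htri
      have := card_agreement_of_hasTriangleType htri
      omega
    | intro p hp
      simp only [mem_filter, mem_univ, true_and, agreement, Prod.mk.injEq, beq_iff_eq,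
        beq_eq_false_iff_ne] at hp
      simp only [HasTriangleType, hammingDist_flipAt, hp.1, hp.2, if_true, if_false]
      omega

lemma Tdist_eq_sum_card {m : ℕ} (C : Fin m → Finset (Fin n → Bool)) (r1 r2 r3 : ℤ)
    (i j k : Fin m) :
    Tdist C r1 r2 r3 i j k =
      ∑ v ∈ C i, ∑ x ∈ C j, (#{y ∈ C k | HasTriangleType r1 r2 r3 v x y} : ℤ) := by
  trans (#{t ∈ C i ×ˢ C j ×ˢ C k | HasTriangleType r1 r2 r3 t.1 t.2.1 t.2.2} : ℤ)
  · rw [Tdist]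
    congr 2
    ext
    rw [mem_filter, mem_filter]
    simp only [mem_product, mem_univ, true_and, HasTriangleType, and_assoc]
  · rw [card_filter, sum_product]
    simp_rw [sum_product, ← card_filter]
    push_cast
    rfl

lemma sum_card_hasTriangleType_mul_quotient {m : ℕ} {C : Fin m → Finset (Fin n → Bool)}
    {S : Matrix (Fin m) (Fin m) ℤ} (hpart : ∀ v, ∃! i, v ∈ C i)
    (hequit : ∀ i, ∀ v ∈ C i, ∀ j, (#{u ∈ C j | (graph n).Adj v u} : ℤ) = S i j)
    (r1 r2 r3 : ℤ) (v x : Fin n → Bool) (k : Fin m) :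
    ∑ t, (#{y ∈ C t | HasTriangleType r1 r2 r3 v x y} : ℤ) * S t k =
      (r1 + 1) * #{z ∈ C k | HasTriangleType (r1 + 1) (r2 - 1) r3 v x z}
      + (r2 + 1) * #{z ∈ C k | HasTriangleType (r1 - 1) (r2 + 1) r3 v x z}
      + (n - r1 - r2 - r3 + 1) * #{z ∈ C k | HasTriangleType r1 r2 (r3 - 1) v x z}
      + (r3 + 1) * #{z ∈ C k | HasTriangleType r1 r2 (r3 + 1) v x z} := by
  rw [sum_card_filter_mul_quotient (graph n) hpart hequit]
  simp_rw [card_filter_adj_eq_card_filter_flipAt, card_hasTriangleType_flipAt, sum_add_distrib,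
    ← mul_sum, natCast_card_filter]

end Hypercube

/-- the triangle distribution of an equitable partition of the `n`-cube
satisfies `T^{r_1,r_2,r_3} S''' = (r_1+1) T^{r_1+1,r_2-1,r_3}
+ (r_2+1) T^{r_1-1,r_2+1,r_3} + (n-r_1-r_2-r_3+1) T^{r_1,r_2,r_3-1}
+ (r_3+1) T^{r_1,r_2,r_3+1}`, where `S'''` acts on the third index. -/
theorem Tdist_recursion {n m : ℕ} (C : Fin m → Finset (Fin n → Bool))
    (S : Matrix (Fin m) (Fin m) ℤ)
    (hpart : ∀ v : Fin n → Bool, ∃! i : Fin m, v ∈ C i)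
    (hequit : ∀ i : Fin m, ∀ v ∈ C i, ∀ j : Fin m,
      (((C j).filter fun u => hammingDist v u = 1).card : ℤ) = S i j)
    (r1 r2 r3 : ℤ) :
    ∀ i j k : Fin m,
      (∑ t : Fin m, Tdist C r1 r2 r3 i j t * S t k) =
        (r1 + 1) * Tdist C (r1 + 1) (r2 - 1) r3 i j k
        + (r2 + 1) * Tdist C (r1 - 1) (r2 + 1) r3 i j k
        + (n - r1 - r2 - r3 + 1) * Tdist C r1 r2 (r3 - 1) i j k
        + (r3 + 1) * Tdist C r1 r2 (r3 + 1) i j k := by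
  intro i j k
  simp_rw [Hypercube.Tdist_eq_sum_card, sum_mul]
  rw [sum_comm]
  simp_rw [mul_sum, ← sum_add_distrib]
  refine sum_congr rfl fun v _ => ?_
  rw [sum_comm]
  exact sum_congr rfl fun x _ =>
    Hypercube.sum_card_hasTriangleType_mul_quotient hpart hequit r1 r2 r3 v x k
end

section
/- For the singleton partition of the n-cube (where S is the 2^n × 2^n adjacency matrix of the n-cube), the vectors T^{r_1,r_2,r_3} over all nonnegative integers r_1, r_2, r_3 with r_1 + r_2 + r_3 ≤ n are linearly independent, and the number of such triples is C(n+3, 3). -/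
/-!
Linear independence is witnessed by a biorthogonal system of points: if `A`, `B`, `C` are
disjoint sets of coordinates of sizes `a`, `b`, `c`, their indicator vectors lie at pairwise
distances `a + b`, `b + c`, `a + c`, and the distances `r₁ + r₂`, `r₂ + r₃`, `r₁ + r₃` determine
`(r₁, r₂, r₃)`, so `T^{r₁,r₂,r₃}` is `1` at this triple exactly when `(r₁, r₂, r₃) = (a, b, c)`.
The count is stars and bars for `r₁ + r₂ + r₃ + s = n` with a slack `s`.
-/

/-- For the singleton partition of the `n`-cube, the vector `T^{r_1,r_2,r_3}`,
indexed by triples of vertices `(i,j,k)`, with entry `1` iff `d(i,j) = r_1+r_2`,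
`d(j,k) = r_2+r_3`, `d(i,k) = r_1+r_3`. -/
def Tsingleton (n : ℕ) (r1 r2 r3 : ℕ) :
    (Fin n → Bool) × (Fin n → Bool) × (Fin n → Bool) → ℝ :=
  fun t =>
    if hammingDist t.1 t.2.1 = r1 + r2 ∧ hammingDist t.2.1 t.2.2 = r2 + r3 ∧
        hammingDist t.1 t.2.2 = r1 + r3 then 1 else 0

open Finset

theorem linearIndependent_of_apply_eq_single {ι X R : Type*} [Semiring R] [DecidableEq ι]
    (f : ι → X → R) (x : ι → X) (h : ∀ i j, f i (x j) = (Pi.single i 1 : ι → R) j) :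
    LinearIndependent R f :=
  have hf : LinearMap.funLeft R R x ∘ f = fun i => Pi.single i 1 := funext fun i => funext (h i)
  .of_comp (LinearMap.funLeft R R x) (hf ▸ Pi.linearIndependent_single_one ι R)

theorem hammingDist_indicator_of_disjoint {ι : Type*} [Fintype ι] [DecidableEq ι]
    {s t : Finset ι} (h : Disjoint s t) :
    hammingDist (fun i => decide (i ∈ s)) (fun i => decide (i ∈ t)) = #s + #t := by
  rw [hammingDist, ← card_union_of_disjoint h]
  congr 1
  ext i
  have hi : i ∈ s → i ∉ t := fun hs => disjoint_left.1 h hs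
  simp only [mem_filter, mem_univ, true_and, ne_eq, decide_eq_decide, mem_union]
  tauto

theorem exists_hammingDist_triple {ι : Type*} [Fintype ι] {a b c : ℕ}
    (h : a + b + c ≤ Fintype.card ι) :
    ∃ t : (ι → Bool) × (ι → Bool) × (ι → Bool), hammingDist t.1 t.2.1 = a + b ∧
      hammingDist t.2.1 t.2.2 = b + c ∧ hammingDist t.1 t.2.2 = a + c := by
  classical
  obtain ⟨A, -, rfl⟩ := exists_subset_card_eq (s := (univ : Finset ι)) (n := a) (by simp; omega)
  obtain ⟨B, hB, rfl⟩ := exists_subset_card_eq (s := Aᶜ) (n := b) (by rw [card_compl]; omega)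
  have hAB : Disjoint A B := subset_compl_iff_disjoint_left.1 hB
  obtain ⟨C, hC, rfl⟩ := exists_subset_card_eq (s := (A ∪ B)ᶜ) (n := c)
    (by rw [card_compl, card_union_of_disjoint hAB]; omega)
  obtain ⟨hAC, hBC⟩ := disjoint_union_left.1 (subset_compl_iff_disjoint_left.1 hC)
  exact ⟨(fun i => decide (i ∈ A), fun i => decide (i ∈ B), fun i => decide (i ∈ C)),
    hammingDist_indicator_of_disjoint hAB, hammingDist_indicator_of_disjoint hBC,
    hammingDist_indicator_of_disjoint hAC⟩

theorem Tsingleton_apply_eq_ite {n a b c x y z : ℕ}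
    {t : (Fin n → Bool) × (Fin n → Bool) × (Fin n → Bool)}
    (ht : hammingDist t.1 t.2.1 = a + b ∧ hammingDist t.2.1 t.2.2 = b + c ∧
      hammingDist t.1 t.2.2 = a + c) :
    Tsingleton n x y z t = if (x, y, z) = (a, b, c) then 1 else 0 := by
  rw [Tsingleton, ht.1, ht.2.1, ht.2.2]
  exact if_congr (by simp only [Prod.mk.injEq]; omega) rfl rfl

def tripleSumLeEquiv (n : ℕ) :
    {r : ℕ × ℕ × ℕ // r.1 + r.2.1 + r.2.2 ≤ n} ≃ {P : Fin 4 → ℕ // ∑ i, P i = n} where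
  toFun r := ⟨![r.1.1, r.1.2.1, r.1.2.2, n - (r.1.1 + r.1.2.1 + r.1.2.2)], by
    simp only [Fin.sum_univ_four, Matrix.cons_val_zero, Matrix.cons_val_one, Matrix.cons_val]
    omega⟩
  invFun P := ⟨(P.1 0, P.1 1, P.1 2), Nat.le.intro (Fin.sum_univ_four P.1 ▸ P.2)⟩
  left_inv r := by simp
  right_inv P := by
    have h := P.2
    rw [Fin.sum_univ_four] at h
    ext i
    fin_cases i <;> simp
    omega

theorem Nat.card_triple_sum_le (n : ℕ) :
    Nat.card {r : ℕ × ℕ × ℕ // r.1 + r.2.1 + r.2.2 ≤ n} = (n + 3).choose 3 := by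
  rw [Nat.card_congr ((tripleSumLeEquiv n).trans (Sym.equivNatSumOfFintype (Fin 4) n).symm),
    Sym.natCard_sym_eq_choose, Nat.card_eq_fintype_card, Fintype.card_fin,
    show 4 + n - 1 = n + 3 by omega, Nat.choose_symm_add]

/-- the vectors `T^{r_1,r_2,r_3}` over nonnegative `r_1,r_2,r_3` with
`r_1+r_2+r_3 ≤ n` are linearly independent, and there are `C(n+3,3)` such triples. -/
theorem Tsingleton_linearIndependent (n : ℕ) :
    LinearIndependent ℝ
      (fun r : {r : ℕ × ℕ × ℕ // r.1 + r.2.1 + r.2.2 ≤ n} =>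
        Tsingleton n r.1.1 r.1.2.1 r.1.2.2) ∧
    Nat.card {r : ℕ × ℕ × ℕ // r.1 + r.2.1 + r.2.2 ≤ n} = Nat.choose (n + 3) 3 := by
  refine ⟨?_, Nat.card_triple_sum_le n⟩
  choose t ht using fun r : {r : ℕ × ℕ × ℕ // r.1 + r.2.1 + r.2.2 ≤ n} =>
    exists_hammingDist_triple (ι := Fin n) (by simpa using r.2)
  refine linearIndependent_of_apply_eq_single _ t fun r s => ?_
  rw [Tsingleton_apply_eq_ite (ht s), Pi.single_apply]
  exact if_congr (by rw [Subtype.ext_iff, eq_comm]) rfl rfl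
end

section
/- The formal power series f(X,Y,Z) = (1+X+Y+Z)^{(n+x+y+z)/4} (1+X−Y−Z)^{(n+x−y−z)/4} (1−X+Y−Z)^{(n−x+y−z)/4} (1−X−Y+Z)^{(n−x−y+z)/4} satisfies the partial differential equation (x − nX) f = (1−X²) ∂f/∂X + (Z−XY) ∂f/∂Y + (Y−XZ) ∂f/∂Z. -/
/-!
Each of the four linear forms `L = 1 + εX + δY + εδZ` (`ε, δ = ±1`) is an eigenfunction of the
vector field `D = (1 - X²) ∂_X + (Z - XY) ∂_Y + (Y - XZ) ∂_Z`: `D L = (ε - X) L`. Since `D` is a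
derivation, `D (∏ Lᵢ ^ aᵢ) = (∑ aᵢ (εᵢ - X)) ∏ Lᵢ ^ aᵢ`, and for the exponents of `f` the
multiplier is `x - nX`.
-/

open Real

def HasPartialDerivsAt (g : ℝ → ℝ → ℝ → ℝ) (gX gY gZ X Y Z : ℝ) : Prop :=
  HasDerivAt (fun t => g t Y Z) gX X ∧ HasDerivAt (fun t => g X t Z) gY Y ∧
    HasDerivAt (fun t => g X Y t) gZ Z

/-- `m` is the logarithmic derivative of `g` at `(X, Y, Z)` along `u ∂_X + v ∂_Y + w ∂_Z`
(any `m` qualifies where `g` vanishes). -/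
def HasLogDerivAlong (g : ℝ → ℝ → ℝ → ℝ) (u v w m X Y Z : ℝ) : Prop :=
  ∃ gX gY gZ, HasPartialDerivsAt g gX gY gZ X Y Z ∧ u * gX + v * gY + w * gZ = m * g X Y Z

namespace HasLogDerivAlong

variable {g h : ℝ → ℝ → ℝ → ℝ} {u v w m m' X Y Z : ℝ}

theorem mul (hg : HasLogDerivAlong g u v w m X Y Z) (hh : HasLogDerivAlong h u v w m' X Y Z) :
    HasLogDerivAlong (fun X Y Z => g X Y Z * h X Y Z) u v w (m + m') X Y Z := by
  obtain ⟨gX, gY, gZ, ⟨hgX, hgY, hgZ⟩, hDg⟩ := hg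
  obtain ⟨hX, hY, hZ, ⟨hhX, hhY, hhZ⟩, hDh⟩ := hh
  refine ⟨_, _, _, ⟨hgX.mul hhX, hgY.mul hhY, hgZ.mul hhZ⟩, ?_⟩
  linear_combination h X Y Z * hDg + g X Y Z * hDh

theorem rpow_const (hg : HasLogDerivAlong g u v w m X Y Z) (hpos : 0 < g X Y Z) (a : ℝ) :
    HasLogDerivAlong (fun X Y Z => g X Y Z ^ a) u v w (a * m) X Y Z := by
  obtain ⟨gX, gY, gZ, ⟨hgX, hgY, hgZ⟩, hDg⟩ := hg
  have hne : g X Y Z ≠ 0 := hpos.ne'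
  refine ⟨_, _, _, ⟨hgX.rpow_const (.inl hne), hgY.rpow_const (.inl hne),
    hgZ.rpow_const (.inl hne)⟩, ?_⟩
  calc _ = a * g X Y Z ^ (a - 1) * (u * gX + v * gY + w * gZ) := by ring
    _ = a * m * g X Y Z ^ a := by rw [hDg, rpow_sub_one hne]; field_simp

theorem deriv_eq (hg : HasLogDerivAlong g u v w m X Y Z) :
    u * deriv (fun t => g t Y Z) X + v * deriv (fun t => g X t Z) Y
      + w * deriv (fun t => g X Y t) Z = m * g X Y Z := by
  obtain ⟨gX, gY, gZ, ⟨hgX, hgY, hgZ⟩, hDg⟩ := hg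
  rw [hgX.deriv, hgY.deriv, hgZ.deriv, hDg]

end HasLogDerivAlong

theorem hasPartialDerivsAt_affine (c α β γ X Y Z : ℝ) :
    HasPartialDerivsAt (fun X Y Z => c + α * X + β * Y + γ * Z) α β γ X Y Z := by
  refine ⟨?_, ?_, ?_⟩
  · simpa using ((hasDerivAt_id X).const_mul α).const_add c |>.add_const (β * Y + γ * Z)
  · simpa using ((hasDerivAt_id Y).const_mul β).const_add (c + α * X) |>.add_const (γ * Z)
  · simpa using ((hasDerivAt_id Z).const_mul γ).const_add (c + α * X + β * Y)

section SignedForm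

variable {ε : ℝ} (hε : |ε| = 1)
include hε

theorem hasLogDerivAlong_signedForm (δ X Y Z : ℝ) :
    HasLogDerivAlong (fun X Y Z => 1 + ε * X + δ * Y + ε * δ * Z)
      (1 - X ^ 2) (Z - X * Y) (Y - X * Z) (ε - X) X Y Z := by
  refine ⟨_, _, _, hasPartialDerivsAt_affine 1 ε δ (ε * δ) X Y Z, ?_⟩
  have hε2 : ε ^ 2 = 1 := by rw [← sq_abs, hε, one_pow]
  linear_combination (-(X + δ * Z)) * hε2

theorem signedForm_pos {δ : ℝ} (hδ : |δ| = 1) {X Y Z : ℝ} (h : |X| + |Y| + |Z| < 1) :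
    0 < 1 + ε * X + δ * Y + ε * δ * Z := by
  have hεX : |ε * X| = |X| := by rw [abs_mul, hε, one_mul]
  have hδY : |δ * Y| = |Y| := by rw [abs_mul, hδ, one_mul]
  have hεδZ : |ε * δ * Z| = |Z| := by rw [abs_mul, abs_mul, hε, hδ, one_mul, one_mul]
  linarith [neg_abs_le (ε * X), neg_abs_le (δ * Y), neg_abs_le (ε * δ * Z)]

end SignedForm

/-- the function
`f(X,Y,Z) = (1+X+Y+Z)^{(n+x+y+z)/4} (1+X-Y-Z)^{(n+x-y-z)/4}
(1-X+Y-Z)^{(n-x+y-z)/4} (1-X-Y+Z)^{(n-x-y+z)/4}`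
satisfies `(x - nX) f = (1-X²) ∂f/∂X + (Z-XY) ∂f/∂Y + (Y-XZ) ∂f/∂Z`
near the origin. -/
theorem generating_function_pde (n x y z : ℝ) :
    let f : ℝ → ℝ → ℝ → ℝ := fun X Y Z =>
      (1 + X + Y + Z) ^ ((n + x + y + z) / 4) *
      (1 + X - Y - Z) ^ ((n + x - y - z) / 4) *
      (1 - X + Y - Z) ^ ((n - x + y - z) / 4) *
      (1 - X - Y + Z) ^ ((n - x - y + z) / 4)
    ∀ X Y Z : ℝ, |X| + |Y| + |Z| < 1 →
      (x - n * X) * f X Y Z =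
        (1 - X ^ 2) * deriv (fun X' => f X' Y Z) X
        + (Z - X * Y) * deriv (fun Y' => f X Y' Z) Y
        + (Y - X * Z) * deriv (fun Z' => f X Y Z') Z := by
  intro f X Y Z h
  have pos : |(1 : ℝ)| = 1 := abs_one
  have neg : |(-1 : ℝ)| = 1 := by simp
  have factor {ε δ : ℝ} (hε : |ε| = 1) (hδ : |δ| = 1) (a : ℝ) :=
    (hasLogDerivAlong_signedForm hε δ X Y Z).rpow_const (signedForm_pos hε hδ h) a
  have hf : HasLogDerivAlong f (1 - X ^ 2) (Z - X * Y) (Y - X * Z) (x - n * X) X Y Z := by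
    convert (((factor pos pos ((n + x + y + z) / 4)).mul
      (factor pos neg ((n + x - y - z) / 4))).mul
      (factor neg pos ((n - x + y - z) / 4))).mul
      (factor neg neg ((n - x - y + z) / 4)) using 1
    · funext X Y Z
      simp only [f]
      ring_nf
    · ring
  exact hf.deriv_eq.symm
end

section
/- Define polynomials P^{r_1,r_2,r_3}(x,y,z) by the recursion: P^{0,0,0} = 1, P^{r_1,r_2,r_3} = 0 if any index is negative, and x·P^{r_1,r_2,r_3} = (r_2+1)P^{r_1,r_2+1,r_3−1} + (r_3+1)P^{r_1,r_2−1,r_3+1} + (n−r_1−r_2−r_3+1)P^{r_1−1,r_2,r_3} + (r_1+1)P^{r_1+1,r_2,r_3} (solving for the underlined last term), together with the symmetric recursions in the other two variables. Then P^{r,0,0}(x,y,z) = K_r((n−x)/2), where K_r(t) = Σ_i (−1)^i C(t,i) C(n−t, r−i) is the Krawtchouk polynomial of degree r. -/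
/-- Generalized binomial coefficient `C(t,i) = t(t-1)⋯(t-i+1)/i!` for real `t`. -/
noncomputable def gchoose (t : ℝ) (i : ℕ) : ℝ :=
  (∏ j ∈ Finset.range i, (t - j)) / (Nat.factorial i)

/-- The Krawtchouk polynomial `K_r(t) = Σ_i (-1)^i C(t,i) C(n-t, r-i)`. -/
noncomputable def krawtchouk (n : ℕ) (r : ℕ) (t : ℝ) : ℝ :=
  ∑ i ∈ Finset.range (r + 1), (-1 : ℝ) ^ i * gchoose t i * gchoose (n - t) (r - i)

/-!
Both `r ↦ P^{r,0,0}(x,y,z)` and `r ↦ K_r((n-x)/2)` satisfy the three-term recurrence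
`(r+2) u_{r+2} = x u_{r+1} - (n-r) u_r` with `u_0 = 1`, `u_1 = x`, so they coincide. For `P` this is
the `x`-recursion at `(r,0,0)`, where the terms with `r_2` or `r_3` negative vanish. For the
Krawtchouk polynomials, split `(r+1) K_{r+1}` along the weights `i + (r+1-i)` and absorb each
weight into a binomial coefficient by `(i+1) C(t,i+1) = (t-i) C(t,i)`.
-/

lemma gchoose_succ_mul (t : ℝ) (i : ℕ) :
    ((i : ℝ) + 1) * gchoose t (i + 1) = (t - i) * gchoose t i := by
  have hfact : (i.factorial : ℝ) ≠ 0 := Nat.cast_ne_zero.mpr i.factorial_ne_zero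
  simp only [gchoose, Finset.prod_range_succ, Nat.factorial_succ, Nat.cast_mul, Nat.cast_add,
    Nat.cast_one]
  field_simp

lemma krawtchouk_zero (n : ℕ) (t : ℝ) : krawtchouk n 0 t = 1 := by
  simp [krawtchouk, gchoose]

lemma krawtchouk_one (n : ℕ) (t : ℝ) : krawtchouk n 1 t = n - 2 * t := by
  simp [krawtchouk, gchoose, Finset.sum_range_succ]
  ring

section KrawtchoukRecurrence

variable (n : ℕ) (t : ℝ)

noncomputable def krawtchoukLeft (k : ℕ) : ℝ :=
  ∑ i ∈ Finset.range (k + 1), (-1 : ℝ) ^ i * i * gchoose t i * gchoose (n - t) (k - i)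

noncomputable def krawtchoukRight (k : ℕ) : ℝ :=
  ∑ i ∈ Finset.range (k + 1),
    (-1 : ℝ) ^ i * ((k : ℝ) - i) * gchoose t i * gchoose (n - t) (k - i)

lemma krawtchoukLeft_add_krawtchoukRight (k : ℕ) :
    krawtchoukLeft n t k + krawtchoukRight n t k = k * krawtchouk n k t := by
  rw [krawtchoukLeft, krawtchoukRight, krawtchouk, Finset.mul_sum, ← Finset.sum_add_distrib]
  refine Finset.sum_congr rfl fun i _ => ?_
  ring

lemma krawtchoukLeft_succ (k : ℕ) :
    krawtchoukLeft n t (k + 1) = krawtchoukLeft n t k - t * krawtchouk n k t := by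
  rw [krawtchoukLeft, Finset.sum_range_succ', krawtchoukLeft, krawtchouk, Finset.mul_sum,
    ← Finset.sum_sub_distrib]
  simp only [Nat.cast_zero, mul_zero, zero_mul, add_zero]
  refine Finset.sum_congr rfl fun i _ => ?_
  rw [Nat.add_sub_add_right, Nat.cast_succ]
  linear_combination (-1 : ℝ) ^ (i + 1) * gchoose (n - t) (k - i) * gchoose_succ_mul t i

lemma krawtchoukRight_succ (k : ℕ) :
    krawtchoukRight n t (k + 1) = (n - t) * krawtchouk n k t - krawtchoukRight n t k := by
  rw [krawtchoukRight, Finset.sum_range_succ, krawtchoukRight, krawtchouk, Finset.mul_sum,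
    ← Finset.sum_sub_distrib]
  simp only [Nat.cast_succ, sub_self, mul_zero, zero_mul, add_zero]
  refine Finset.sum_congr rfl fun i hi => ?_
  have hik : i ≤ k := Nat.lt_succ_iff.mp (Finset.mem_range.mp hi)
  have habsorb := gchoose_succ_mul (n - t) (k - i)
  rw [Nat.cast_sub hik] at habsorb
  rw [Nat.succ_sub hik]
  linear_combination (-1 : ℝ) ^ i * gchoose t i * habsorb

theorem krawtchouk_succ_succ (k : ℕ) :
    ((k : ℝ) + 2) * krawtchouk n (k + 2) t
      = (n - 2 * t) * krawtchouk n (k + 1) t - (n - k) * krawtchouk n k t := by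
  have h₂ := krawtchoukLeft_add_krawtchoukRight n t (k + 2)
  have h₀ := krawtchoukLeft_add_krawtchoukRight n t k
  rw [krawtchoukLeft_succ, krawtchoukRight_succ, krawtchoukLeft_succ, krawtchoukRight_succ]
    at h₂
  push_cast at h₂
  linear_combination -h₂ + h₀

end KrawtchoukRecurrence

theorem seq_eq_of_recurrence {R : Type*} [CommRing R] [IsDomain R] {u v : ℕ → R}
    (a b c : ℕ → R) (hc : ∀ k, c k ≠ 0)
    (hu : ∀ k, c k * u (k + 2) = a k * u (k + 1) + b k * u k)
    (hv : ∀ k, c k * v (k + 2) = a k * v (k + 1) + b k * v k)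
    (h₀ : u 0 = v 0) (h₁ : u 1 = v 1) : u = v := by
  suffices h : ∀ k, u k = v k ∧ u (k + 1) = v (k + 1) from funext fun k => (h k).1
  intro k
  induction k with
  | zero => exact ⟨h₀, h₁⟩
  | succ k ih =>
    refine ⟨ih.2, mul_left_cancel₀ (hc k) ?_⟩
    rw [hu, hv, ih.1, ih.2]

theorem P_r00_eq_krawtchouk_general (n : ℕ) (P : ℤ → ℤ → ℤ → ℝ → ℝ → ℝ → ℝ)
    (hP0 : ∀ x y z : ℝ, P 0 0 0 x y z = 1)
    (hneg : ∀ r1 r2 r3 : ℤ, (r1 < 0 ∨ r2 < 0 ∨ r3 < 0) →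
      ∀ x y z : ℝ, P r1 r2 r3 x y z = 0)
    (hrecx : ∀ r1 r2 r3 : ℤ, 0 ≤ r1 → 0 ≤ r2 → 0 ≤ r3 → ∀ x y z : ℝ,
      x * P r1 r2 r3 x y z =
        (r2 + 1) * P r1 (r2 + 1) (r3 - 1) x y z
        + (r3 + 1) * P r1 (r2 - 1) (r3 + 1) x y z
        + ((n : ℝ) - r1 - r2 - r3 + 1) * P (r1 - 1) r2 r3 x y z
        + (r1 + 1) * P (r1 + 1) r2 r3 x y z) :
    ∀ (r : ℕ) (x y z : ℝ), P r 0 0 x y z = krawtchouk n r ((n - x) / 2) := by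
  intro r x y z
  have hrec : ∀ r : ℕ, x * P r 0 0 x y z
      = (n - r + 1) * P (r - 1) 0 0 x y z + (r + 1) * P (r + 1) 0 0 x y z := by
    intro r
    have h := hrecx r 0 0 r.cast_nonneg le_rfl le_rfl x y z
    rw [hneg r (0 + 1) (0 - 1) (by omega) x y z, hneg r (0 - 1) (0 + 1) (by omega) x y z] at h
    push_cast at h
    linarith
  have hP1 : P 1 0 0 x y z = x := by
    have h := hrec 0
    rw [Nat.cast_zero, zero_sub, hneg (-1) 0 0 (by omega) x y z, hP0] at h
    push_cast at h
    linarith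
  have hx : (n : ℝ) - 2 * ((n - x) / 2) = x := by ring
  refine congrFun (seq_eq_of_recurrence (u := fun r => P r 0 0 x y z)
    (v := fun r => krawtchouk n r ((n - x) / 2)) (fun _ => x) (fun k => -((n : ℝ) - k))
    (fun k => (k : ℝ) + 2) (fun k => by positivity) (fun k => ?_) (fun k => ?_) ?_ ?_) r
  · have h := hrec (k + 1)
    push_cast at h ⊢
    rw [add_sub_cancel_right, add_assoc (k : ℤ), one_add_one_eq_two] at h
    linarith
  · rw [krawtchouk_succ_succ, hx]
    ring
  · simp [hP0, krawtchouk_zero]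
  · simp [hP1, krawtchouk_one, hx]

/-- if the polynomials `P^{r_1,r_2,r_3}` satisfy `P^{0,0,0} = 1`,
vanish for negative indices, and satisfy the three symmetric recursions, then
`P^{r,0,0}(x,y,z) = K_r((n-x)/2)`, the Krawtchouk polynomial. -/
theorem P_r00_eq_krawtchouk (n : ℕ) (P : ℤ → ℤ → ℤ → ℝ → ℝ → ℝ → ℝ)
    (hP0 : ∀ x y z : ℝ, P 0 0 0 x y z = 1)
    (hneg : ∀ r1 r2 r3 : ℤ, (r1 < 0 ∨ r2 < 0 ∨ r3 < 0) →
      ∀ x y z : ℝ, P r1 r2 r3 x y z = 0)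
    (hrecx : ∀ r1 r2 r3 : ℤ, 0 ≤ r1 → 0 ≤ r2 → 0 ≤ r3 → ∀ x y z : ℝ,
      x * P r1 r2 r3 x y z =
        (r2 + 1) * P r1 (r2 + 1) (r3 - 1) x y z
        + (r3 + 1) * P r1 (r2 - 1) (r3 + 1) x y z
        + ((n : ℝ) - r1 - r2 - r3 + 1) * P (r1 - 1) r2 r3 x y z
        + (r1 + 1) * P (r1 + 1) r2 r3 x y z)
    (hrecy : ∀ r1 r2 r3 : ℤ, 0 ≤ r1 → 0 ≤ r2 → 0 ≤ r3 → ∀ x y z : ℝ,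
      y * P r1 r2 r3 x y z =
        (r1 + 1) * P (r1 + 1) r2 (r3 - 1) x y z
        + (r3 + 1) * P (r1 - 1) r2 (r3 + 1) x y z
        + ((n : ℝ) - r1 - r2 - r3 + 1) * P r1 (r2 - 1) r3 x y z
        + (r2 + 1) * P r1 (r2 + 1) r3 x y z)
    (hrecz : ∀ r1 r2 r3 : ℤ, 0 ≤ r1 → 0 ≤ r2 → 0 ≤ r3 → ∀ x y z : ℝ,
      z * P r1 r2 r3 x y z =
        (r1 + 1) * P (r1 + 1) (r2 - 1) r3 x y z
        + (r2 + 1) * P (r1 - 1) (r2 + 1) r3 x y z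
        + ((n : ℝ) - r1 - r2 - r3 + 1) * P r1 r2 (r3 - 1) x y z
        + (r3 + 1) * P r1 r2 (r3 + 1) x y z) :
    ∀ (r : ℕ) (x y z : ℝ), P r 0 0 x y z = krawtchouk n r ((n - x) / 2) :=
  P_r00_eq_krawtchouk_general n P hP0 hneg hrecx
end
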